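/- Under the RIP hypothesis with constants 0 < α ≤ β satisfying β ≤ 1/μ, set a := 2/(μα) − 2. Then for every x ∈ H and every k ≥ 0 the IHT iterates satisfy ‖x − x^k‖ ≤ a^{k/2}·‖x_A‖ + √((4/α)·Σ_{n=0}^{k−1} a^{k−1−n}·‖e_A^n‖²) + ‖x_A − x‖. -/

import Mathlib

/-!
Write `u = x + μ Φ'(x)* r` for the gradient step and `x'` for its projection onto `A`. As `x'` is
at least as close to `u` as `x_A ∈ A`, we get `‖x_A - x'‖² ≤ 2⟪x_A - u, x_A - x'⟫`. Expanding the
right-hand side with the linearization `r = Φ'(x)(x_A - x) + e`, the upper RIP bound together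
with `μβ ≤ 1` absorbs the `‖Φ'(x)(x' - x)‖²` term, and the lower RIP bound at `x_A - x` and
`x_A - x'` leaves the one-step contraction `‖x_A - x'‖² ≤ a‖x_A - x‖² + (4/α)‖e‖²`. Unrolling it
from `x⁰ = 0`, taking square roots and using the triangle inequality through `x_A` gives the bound.
-/

open Finset
open scoped RealInnerProductSpace

section InnerProduct

variable {E F : Type*} [NormedAddCommGroup E] [InnerProductSpace ℝ E]

theorem norm_sub_sq_le_two_inner_of_norm_sub_le {x y z : E} (h : ‖z - x‖ ≤ ‖z - y‖) :
    ‖y - x‖ ^ 2 ≤ 2 * ⟪y - z, y - x⟫ := by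
  have hsq : ‖(z - y) + (y - x)‖ ^ 2 ≤ ‖z - y‖ ^ 2 := by
    rw [sub_add_sub_cancel]
    exact pow_le_pow_left₀ (norm_nonneg _) h 2
  rw [norm_add_sq_real, ← neg_sub y z, inner_neg_left] at hsq
  linarith

variable [CompleteSpace E] [NormedAddCommGroup F] [InnerProductSpace ℝ F] [CompleteSpace F]

theorem iht_step_norm_sub_sq_le (T : E →L[ℝ] F) {x x' z : E} {r : F} {μ α : ℝ}
    (hμ : 0 < μ) (hα : 0 < α)
    (hproj : ‖x + μ • T.adjoint r - x'‖ ≤ ‖x + μ • T.adjoint r - z‖)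
    (hz : α * ‖z - x‖ ^ 2 ≤ ‖T (z - x)‖ ^ 2) (hx' : α * ‖z - x'‖ ^ 2 ≤ ‖T (z - x')‖ ^ 2)
    (hup : μ * ‖T (x' - x)‖ ^ 2 ≤ ‖x' - x‖ ^ 2) :
    ‖z - x'‖ ^ 2 ≤ (2 / (μ * α) - 2) * ‖z - x‖ ^ 2 + 4 / α * ‖r - T (z - x)‖ ^ 2 := by
  have hclose := norm_sub_sq_le_two_inner_of_norm_sub_le hproj
  set v := z - x
  set w := z - x'
  set e := r - T v
  have hshift : z - (x + μ • T.adjoint r) = v - μ • T.adjoint r := by simp only [v]; abel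
  have hr : r = T v + e := by simp only [e, add_sub_cancel]
  have hvw : v - w = x' - x := by simp only [v, w]; abel
  clear_value v w e
  have hdescent : ‖w‖ ^ 2 ≤ 2 * ⟪v, w⟫ - 2 * μ * ⟪T v, T w⟫ - 2 * μ * ⟪e, T w⟫ := by
    rw [hshift, inner_sub_left, real_inner_smul_left, ContinuousLinearMap.adjoint_inner_left,
      hr, inner_add_left] at hclose
    linarith
  have hpolar : 2 * ⟪v, w⟫ = ‖v‖ ^ 2 + ‖w‖ ^ 2 - ‖x' - x‖ ^ 2 := by
    rw [← hvw, norm_sub_sq_real]; ring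
  have hpolarT : 2 * ⟪T v, T w⟫ = ‖T v‖ ^ 2 + ‖T w‖ ^ 2 - ‖T (x' - x)‖ ^ 2 := by
    rw [← hvw, map_sub T v w, norm_sub_sq_real]; ring
  have hcs : -⟪e, T w⟫ ≤ ‖e‖ * ‖T w‖ := (neg_le_abs _).trans (abs_real_inner_le_norm e (T w))
  -- `2‖e‖‖Tw‖ ≤ ‖Tw‖²/2 + 2‖e‖²` turns the cross term into the `4/α` term
  have hmain : μ * α * ‖w‖ ^ 2 ≤ 2 * (1 - μ * α) * ‖v‖ ^ 2 + 4 * μ * ‖e‖ ^ 2 := by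
    nlinarith [mul_le_mul_of_nonneg_left hz hμ.le, mul_le_mul_of_nonneg_left hx' hμ.le,
      mul_le_mul_of_nonneg_left hcs hμ.le, mul_nonneg hμ.le (sq_nonneg (‖T w‖ - 2 * ‖e‖))]
  have hμα : 0 < μ * α := mul_pos hμ hα
  calc ‖w‖ ^ 2 ≤ (2 * (1 - μ * α) * ‖v‖ ^ 2 + 4 * μ * ‖e‖ ^ 2) / (μ * α) := by
        rw [le_div_iff₀ hμα]; linarith
    _ = (2 / (μ * α) - 2) * ‖v‖ ^ 2 + 4 / α * ‖e‖ ^ 2 := by field_simp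

end InnerProduct

theorem le_pow_mul_add_sum_of_le_mul_add {a : ℝ} (ha : 0 ≤ a) {d b : ℕ → ℝ}
    (h : ∀ n, d (n + 1) ≤ a * d n + b n) (k : ℕ) :
    d k ≤ a ^ k * d 0 + ∑ n ∈ range k, a ^ (k - 1 - n) * b n := by
  induction k with
  | zero => simp
  | succ k ih =>
    have hsum : ∑ n ∈ range (k + 1), a ^ (k + 1 - 1 - n) * b n
        = a * ∑ n ∈ range k, a ^ (k - 1 - n) * b n + b k := by
      rw [sum_range_succ, mul_sum, Nat.add_sub_cancel, Nat.sub_self, pow_zero, one_mul]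
      congr 1
      refine sum_congr rfl fun n hn => ?_
      rw [show k - n = k - 1 - n + 1 by have := mem_range.mp hn; omega, pow_succ]
      ring
    rw [hsum, pow_succ]
    nlinarith [h k, mul_le_mul_of_nonneg_left ih ha]

theorem Real.sqrt_add_le_add_sqrt {x y : ℝ} (hx : 0 ≤ x) (hy : 0 ≤ y) : √(x + y) ≤ √x + √y :=
  Real.sqrt_le_iff.mpr ⟨by positivity, by
    nlinarith [Real.sq_sqrt hx, Real.sq_sqrt hy, Real.sqrt_nonneg x, Real.sqrt_nonneg y]⟩

theorem Real.sqrt_pow_mul_sq {a t : ℝ} (ha : 0 ≤ a) (ht : 0 ≤ t) (k : ℕ) :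
    √(a ^ k * t ^ 2) = a ^ ((k : ℝ) / 2) * t := by
  rw [Real.sqrt_mul (pow_nonneg ha k), Real.sqrt_sq ht, Real.sqrt_eq_rpow,
    ← Real.rpow_natCast_mul ha, mul_one_div]

theorem nonlinear_iht_recovery_bound_general
    {N M : ℕ}
    (Φ : EuclideanSpace ℝ (Fin N) → EuclideanSpace ℝ (Fin M))
    (Φ' : EuclideanSpace ℝ (Fin N) → (EuclideanSpace ℝ (Fin N) →L[ℝ] EuclideanSpace ℝ (Fin M)))
    (A : Set (EuclideanSpace ℝ (Fin N))) (hA0 : (0 : EuclideanSpace ℝ (Fin N)) ∈ A)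
    (PA : EuclideanSpace ℝ (Fin N) → EuclideanSpace ℝ (Fin N))
    (hPA : ∀ z, PA z ∈ A ∧ ∀ a ∈ A, ‖z - PA z‖ ≤ ‖z - a‖)
    (y : EuclideanSpace ℝ (Fin M)) (μ α β : ℝ)
    (hμ : 0 < μ) (hα : 0 < α) (hαβ : α ≤ β) (hβμ : β ≤ 1 / μ)
    (hRIP : ∀ u ∈ A, ∀ v ∈ A, ∀ w ∈ A,
      α * ‖u - v‖ ^ 2 ≤ ‖Φ' w (u - v)‖ ^ 2 ∧ ‖Φ' w (u - v)‖ ^ 2 ≤ β * ‖u - v‖ ^ 2)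
    (xseq : ℕ → EuclideanSpace ℝ (Fin N)) (hx0 : xseq 0 = 0)
    (hxit : ∀ n, xseq (n + 1) =
      PA (xseq n + μ • (ContinuousLinearMap.adjoint (Φ' (xseq n))) (y - Φ (xseq n))))
    (xA : EuclideanSpace ℝ (Fin N)) (hxA : xA ∈ A)
 :
    ∀ (x : EuclideanSpace ℝ (Fin N)) (k : ℕ), ‖x - xseq k‖ ≤
      (2 / (μ * α) - 2) ^ ((k : ℝ) / 2) * ‖xA‖ +
        Real.sqrt ((4 / α) * ∑ n ∈ Finset.range k,
          (2 / (μ * α) - 2) ^ (k - 1 - n) * ‖y - Φ (xseq n) - (Φ' (xseq n)) (xA - xseq n)‖ ^ 2) +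
        ‖xA - x‖ := by
  intro x k
  set a := 2 / (μ * α) - 2
  set e := fun n => ‖y - Φ (xseq n) - (Φ' (xseq n)) (xA - xseq n)‖ ^ 2
  have hμβ : μ * β ≤ 1 := by rwa [le_div_iff₀ hμ, mul_comm] at hβμ
  have ha : 0 ≤ a := by
    have : 2 ≤ 2 / (μ * α) := by rw [le_div_iff₀ (by positivity)]; nlinarith
    linarith
  have hmem : ∀ n, xseq n ∈ A
    | 0 => hx0 ▸ hA0
    | n + 1 => hxit n ▸ (hPA _).1
  have hstep : ∀ n, ‖xA - xseq (n + 1)‖ ^ 2 ≤ a * ‖xA - xseq n‖ ^ 2 + 4 / α * e n := by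
    intro n
    have hup : μ * ‖Φ' (xseq n) (xseq (n + 1) - xseq n)‖ ^ 2 ≤ ‖xseq (n + 1) - xseq n‖ ^ 2 := by
      nlinarith [(hRIP _ (hmem (n + 1)) _ (hmem n) _ (hmem n)).2,
        sq_nonneg ‖xseq (n + 1) - xseq n‖]
    exact iht_step_norm_sub_sq_le _ hμ hα (hxit n ▸ (hPA _).2 xA hxA)
      (hRIP _ hxA _ (hmem n) _ (hmem n)).1 (hRIP _ hxA _ (hmem (n + 1)) _ (hmem n)).1 hup
  have hsq : ‖xA - xseq k‖ ^ 2 ≤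
      a ^ k * ‖xA‖ ^ 2 + 4 / α * ∑ n ∈ range k, a ^ (k - 1 - n) * e n := by
    simpa only [hx0, sub_zero, mul_sum, mul_left_comm (4 / α)] using
      le_pow_mul_add_sum_of_le_mul_add (d := fun n => ‖xA - xseq n‖ ^ 2) ha hstep k
  have hS : 0 ≤ 4 / α * ∑ n ∈ range k, a ^ (k - 1 - n) * e n := by positivity
  calc ‖x - xseq k‖ ≤ ‖x - xA‖ + ‖xA - xseq k‖ := norm_sub_le_norm_sub_add_norm_sub _ _ _
    _ ≤ ‖xA - x‖ + √(a ^ k * ‖xA‖ ^ 2 + 4 / α * ∑ n ∈ range k, a ^ (k - 1 - n) * e n) := by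
      rw [norm_sub_rev x]
      gcongr
      exact Real.le_sqrt_of_sq_le hsq
    _ ≤ _ := by
      rw [add_comm ‖xA - x‖, ← Real.sqrt_pow_mul_sq ha (norm_nonneg xA)]
      gcongr
      exact Real.sqrt_add_le_add_sqrt (by positivity) hS

/-- Under the RIP hypothesis with constants `0 < α ≤ β` satisfying `β ≤ 1/μ`,
setting `a := 2/(μα) − 2`, for every `x` and every `k ≥ 0` the nonlinear IHT iterates satisfy
`‖x − x^k‖ ≤ a^{k/2}‖x_A‖ + √((4/α)·Σ_{n=0}^{k−1} a^{k−1−n}‖e_A^n‖²) + ‖x_A − x‖`. -/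
theorem nonlinear_iht_recovery_bound
    {N M : ℕ}
    (Φ : EuclideanSpace ℝ (Fin N) → EuclideanSpace ℝ (Fin M))
    (Φ' : EuclideanSpace ℝ (Fin N) → (EuclideanSpace ℝ (Fin N) →L[ℝ] EuclideanSpace ℝ (Fin M)))
    (hΦ : ∀ u, HasFDerivAt Φ (Φ' u) u)
    (A : Set (EuclideanSpace ℝ (Fin N))) (hA0 : (0 : EuclideanSpace ℝ (Fin N)) ∈ A)
    (PA : EuclideanSpace ℝ (Fin N) → EuclideanSpace ℝ (Fin N))
    (hPA : ∀ z, PA z ∈ A ∧ ∀ a ∈ A, ‖z - PA z‖ ≤ ‖z - a‖)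
    (y : EuclideanSpace ℝ (Fin M)) (μ α β : ℝ)
    (hμ : 0 < μ) (hα : 0 < α) (hαβ : α ≤ β) (hβμ : β ≤ 1 / μ)
    (hRIP : ∀ u ∈ A, ∀ v ∈ A, ∀ w ∈ A,
      α * ‖u - v‖ ^ 2 ≤ ‖Φ' w (u - v)‖ ^ 2 ∧ ‖Φ' w (u - v)‖ ^ 2 ≤ β * ‖u - v‖ ^ 2)
    (xseq : ℕ → EuclideanSpace ℝ (Fin N)) (hx0 : xseq 0 = 0)
    (hxit : ∀ n, xseq (n + 1) =
      PA (xseq n + μ • (ContinuousLinearMap.adjoint (Φ' (xseq n))) (y - Φ (xseq n))))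
    (xA : EuclideanSpace ℝ (Fin N)) (hxA : xA ∈ A)
 :
    ∀ (x : EuclideanSpace ℝ (Fin N)) (k : ℕ), ‖x - xseq k‖ ≤
      (2 / (μ * α) - 2) ^ ((k : ℝ) / 2) * ‖xA‖ +
        Real.sqrt ((4 / α) * ∑ n ∈ Finset.range k,
          (2 / (μ * α) - 2) ^ (k - 1 - n) * ‖y - Φ (xseq n) - (Φ' (xseq n)) (xA - xseq n)‖ ^ 2) +
        ‖xA - x‖ :=
  nonlinear_iht_recovery_bound_general Φ Φ' A hA0 PA hPA y μ α β hμ hα hαβ hβμ hRIP xseq hx0 hxit xA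
    hxA
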